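/- arXiv:2409.16691 — 2 statements merged into one kernel-verified Lean document; each statement's English description precedes it below -/
import Mathlib

section
/- For a nonnegative function g : ℝⁿ → [0,∞) and 0 < s ≤ n, the thermic Besov norm ‖g‖_{Ḃ^{-s,∞}_∞} = sup_{t>0} t^{s/2} ‖h_t * g‖_{L^∞} is equivalent to the Morrey norm ‖g‖_{Ṁ^{1,n/s}}: there is C = C(n,s) ≥ 1 with C^{-1} ‖g‖_{Ṁ^{1,n/s}} ≤ ‖g‖_{Ḃ^{-s,∞}_∞} ≤ C ‖g‖_{Ṁ^{1,n/s}}. -/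
open MeasureTheory Metric Set ENNReal

noncomputable def heatK (n : ℕ) (t : ℝ) (x : EuclideanSpace ℝ (Fin n)) : ℝ :=
  (4 * Real.pi * t) ^ (-(n : ℝ) / 2) * Real.exp (-‖x‖ ^ 2 / (4 * t))

noncomputable def heatConv (n : ℕ) (t : ℝ) (g : EuclideanSpace ℝ (Fin n) → ℝ)
    (x : EuclideanSpace ℝ (Fin n)) : ℝ≥0∞ :=
  ∫⁻ y, ENNReal.ofReal (heatK n t (x - y) * g y)

noncomputable def morreyNorm (n : ℕ) (p q : ℝ) (f : EuclideanSpace ℝ (Fin n) → ℝ) : ℝ≥0∞ :=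
  ⨆ (x : EuclideanSpace ℝ (Fin n)) (r : ℝ) (_ : 0 < r),
    (ENNReal.ofReal (r ^ (-((n : ℝ) * (1 - p / q)))) *
      ∫⁻ y in ball x r, ENNReal.ofReal (|f y| ^ p)) ^ (1 / p)

/-- Thermic Besov norm `‖g‖_{Ḃ^{-s,∞}_∞} = sup_{t>0} t^{s/2} ‖h_t * g‖_{L^∞}`. -/
noncomputable def besovNorm (n : ℕ) (s : ℝ) (g : EuclideanSpace ℝ (Fin n) → ℝ) : ℝ≥0∞ :=
  ⨆ (t : ℝ) (_ : 0 < t), ENNReal.ofReal (t ^ (s / 2)) *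
    ⨆ x : EuclideanSpace ℝ (Fin n), heatConv n t g x

/-!
Lower bound: at time `t = r²` the Gaussian `h_t` is at least `(4π)^{-n/2} e^{-1/4} r^{-n}` on the
ball of radius `r`, so `r^s (h_{r²} * g)(x)` dominates `r^{s-n} ∫_{B(x,r)} g`.

Upper bound: on the dyadic annulus `2^{k-1} r ≤ |x - y| < 2^k r` the kernel `h_{r²}(x - y)` is at
most `(4π)^{-n/2} r^{-n} e^{-4^{k-1}/4}`, while the Morrey norm bounds the mass of `|g|` there by
`(2^k r)^{n-s} ‖g‖`. The Gaussian factor beats the polynomial growth `2^{k(n-s)}`: by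
`e^{-x} ≤ n!/x^n` the series over `k` is dominated by a geometric one.
-/

open scoped Real Nat

section DyadicAnnulus

variable {E : Type*} [PseudoMetricSpace E]

def dyadicAnnulus (x : E) (r : ℝ) : ℕ → Set E
  | 0 => ball x r
  | k + 1 => ball x (2 ^ (k + 1) * r) \ ball x (2 ^ k * r)

lemma dyadicAnnulus_subset_ball (x : E) (r : ℝ) (k : ℕ) :
    dyadicAnnulus x r k ⊆ ball x (2 ^ k * r) := by
  cases k with
  | zero => simp [dyadicAnnulus]
  | succ k => exact sdiff_subset

lemma le_dist_of_mem_dyadicAnnulus_succ {x y : E} {r : ℝ} {k : ℕ}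
    (hy : y ∈ dyadicAnnulus x r (k + 1)) : 2 ^ k * r ≤ dist y x :=
  not_lt.1 hy.2

lemma iUnion_dyadicAnnulus (x : E) {r : ℝ} (hr : 0 < r) : ⋃ k, dyadicAnnulus x r k = univ := by
  have hball : ∀ k, ball x (2 ^ k * r) ⊆ ⋃ j, dyadicAnnulus x r j := by
    intro k
    induction k with
    | zero => simpa [dyadicAnnulus] using subset_iUnion (dyadicAnnulus x r) 0
    | succ k ih =>
      intro y hy
      by_cases hyk : y ∈ ball x (2 ^ k * r)
      · exact ih hyk
      · exact subset_iUnion (dyadicAnnulus x r) (k + 1) ⟨hy, hyk⟩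
  refine eq_univ_of_forall fun y => ?_
  obtain ⟨k, hk⟩ := pow_unbounded_of_one_lt (dist y x / r) one_lt_two
  exact hball k (mem_ball.2 (by rwa [div_lt_iff₀ hr] at hk))

lemma measurableSet_dyadicAnnulus [MeasurableSpace E] [OpensMeasurableSpace E]
    (x : E) (r : ℝ) (k : ℕ) : MeasurableSet (dyadicAnnulus x r k) := by
  cases k with
  | zero => exact measurableSet_ball
  | succ k => exact measurableSet_ball.diff measurableSet_ball

end DyadicAnnulus

noncomputable def dyadicGaussWeight : ℕ → ℝ
  | 0 => 1
  | k + 1 => Real.exp (-4 ^ k / 4)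

lemma exp_neg_le_dyadicGaussWeight {E : Type*} [PseudoMetricSpace E] {x y : E} {r : ℝ}
    (hr : 0 < r) {k : ℕ} (hy : y ∈ dyadicAnnulus x r k) :
    Real.exp (-dist x y ^ 2 / (4 * r ^ 2)) ≤ dyadicGaussWeight k := by
  cases k with
  | zero =>
    rw [dyadicGaussWeight, Real.exp_le_one_iff, neg_div]
    exact neg_nonpos_of_nonneg (by positivity)
  | succ k =>
    have hd : (2 ^ k * r) ^ 2 ≤ dist x y ^ 2 := by
      rw [dist_comm]
      exact pow_le_pow_left₀ (by positivity) (le_dist_of_mem_dyadicAnnulus_succ hy) 2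
    rw [dyadicGaussWeight, Real.exp_le_exp, neg_div, neg_div, neg_le_neg_iff,
      div_le_div_iff₀ (by norm_num) (by positivity)]
    calc (4 : ℝ) ^ k * (4 * r ^ 2) = 4 * (2 ^ k * r) ^ 2 := by
          rw [mul_pow, ← pow_mul, pow_mul']; norm_num; ring
      _ ≤ dist x y ^ 2 * 4 := by linarith

lemma exp_neg_le_factorial_div_pow {x : ℝ} (hx : 0 < x) (m : ℕ) :
    Real.exp (-x) ≤ m ! / x ^ m := by
  rw [Real.exp_neg, ← inv_div]
  exact inv_anti₀ (by positivity) (Real.pow_div_factorial_le_exp x hx.le m)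

lemma dyadicGaussWeight_nonneg (k : ℕ) : 0 ≤ dyadicGaussWeight k := by
  cases k <;> simp only [dyadicGaussWeight] <;> positivity

lemma dyadicGaussWeight_mul_rpow_le {n : ℕ} (hn : n ≠ 0) {s : ℝ} (hs : 0 ≤ s) (k : ℕ) :
    dyadicGaussWeight k * ((2 : ℝ) ^ k) ^ ((n : ℝ) - s) ≤ n ! * 16 ^ n * (1 / 2) ^ k := by
  have hvol : ((2 : ℝ) ^ k) ^ ((n : ℝ) - s) ≤ 2 ^ (k * n) := by
    calc ((2 : ℝ) ^ k) ^ ((n : ℝ) - s) ≤ ((2 : ℝ) ^ k) ^ (n : ℝ) :=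
          Real.rpow_le_rpow_of_exponent_le (one_le_pow₀ one_le_two) (by linarith)
      _ = 2 ^ (k * n) := by rw [Real.rpow_natCast, pow_mul]
  cases k with
  | zero =>
    have hfac : (1 : ℝ) ≤ n ! := by exact_mod_cast n.factorial_pos
    have h16 : (1 : ℝ) ≤ 16 ^ n := one_le_pow₀ (by norm_num)
    simp only [dyadicGaussWeight, pow_zero, Real.one_rpow, mul_one]
    nlinarith
  | succ k =>
    have hexp : dyadicGaussWeight (k + 1) ≤ n ! / (4 ^ k / 4) ^ n := by
      rw [dyadicGaussWeight, neg_div]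
      exact exp_neg_le_factorial_div_pow (by positivity) n
    have hexp_le : (2 : ℕ) ^ ((k + 1) * n) * 2 ^ (k + 1) * 4 ^ n ≤ 16 ^ n * (4 ^ k) ^ n := by
      rw [show 4 = 2 ^ 2 by rfl, show 16 = 2 ^ 4 by rfl]
      simp only [← pow_mul, ← pow_add]
      refine Nat.pow_le_pow_right two_pos ?_
      have : k ≤ k * n := Nat.le_mul_of_pos_right k (Nat.pos_of_ne_zero hn)
      ring_nf
      omega
    calc dyadicGaussWeight (k + 1) * ((2 : ℝ) ^ (k + 1)) ^ ((n : ℝ) - s)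
        ≤ n ! / (4 ^ k / 4) ^ n * 2 ^ ((k + 1) * n) :=
          mul_le_mul hexp hvol (by positivity) (by positivity)
      _ ≤ n ! * 16 ^ n * (1 / 2) ^ (k + 1) := by
          rw [div_pow, div_div_eq_mul_div, one_div_pow, mul_div_assoc', div_mul_eq_mul_div,
            div_le_div_iff₀ (by positivity) (by positivity)]
          have := mul_le_mul_of_nonneg_left (by exact_mod_cast hexp_le :
            (2 : ℝ) ^ ((k + 1) * n) * 2 ^ (k + 1) * 4 ^ n ≤ 16 ^ n * (4 ^ k) ^ n)
            (by positivity : (0 : ℝ) ≤ n !)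
          linarith

lemma sq_rpow_half {r : ℝ} (hr : 0 ≤ r) (a : ℝ) : (r ^ 2) ^ (a / 2) = r ^ a := by
  rw [← Real.rpow_natCast_mul hr, Nat.cast_ofNat, mul_div_cancel₀ _ two_ne_zero]

lemma heatK_sq (n : ℕ) {r : ℝ} (hr : 0 ≤ r) (z : EuclideanSpace ℝ (Fin n)) :
    heatK n (r ^ 2) z = (4 * π) ^ (-(n : ℝ) / 2) * r ^ (-(n : ℝ)) *
      Real.exp (-‖z‖ ^ 2 / (4 * r ^ 2)) := by
  rw [heatK, Real.mul_rpow (by positivity) (by positivity), sq_rpow_half hr]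

lemma morreyNorm_one_div_eq {n : ℕ} (hn : n ≠ 0) (s : ℝ)
    (f : EuclideanSpace ℝ (Fin n) → ℝ) :
    morreyNorm n 1 (n / s) f = ⨆ (x : EuclideanSpace ℝ (Fin n)) (r : ℝ) (_ : 0 < r),
      ENNReal.ofReal (r ^ (s - n)) * ∫⁻ y in ball x r, ENNReal.ofReal |f y| := by
  have hexp : -((n : ℝ) * (1 - 1 / (n / s))) = s - n := by
    field_simp
    ring
  simp only [morreyNorm, hexp, Real.rpow_one, div_one, ENNReal.rpow_one]

lemma lintegral_ball_le_morreyNorm {n : ℕ} (hn : n ≠ 0) (s : ℝ)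
    (f : EuclideanSpace ℝ (Fin n) → ℝ) (x : EuclideanSpace ℝ (Fin n)) {r : ℝ}
    (hr : 0 < r) :
    ∫⁻ y in ball x r, ENNReal.ofReal |f y| ≤
      ENNReal.ofReal (r ^ ((n : ℝ) - s)) * morreyNorm n 1 (n / s) f := by
  have hM : ENNReal.ofReal (r ^ (s - n)) * ∫⁻ y in ball x r, ENNReal.ofReal |f y| ≤
      morreyNorm n 1 (n / s) f := by
    rw [morreyNorm_one_div_eq hn s]
    exact le_iSup₂_of_le x r (le_iSup_of_le hr le_rfl)
  calc ∫⁻ y in ball x r, ENNReal.ofReal |f y|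
      = ENNReal.ofReal (r ^ ((n : ℝ) - s)) *
          (ENNReal.ofReal (r ^ (s - n)) * ∫⁻ y in ball x r, ENNReal.ofReal |f y|) := by
        rw [← mul_assoc, ← ENNReal.ofReal_mul (by positivity), ← Real.rpow_add hr,
          sub_add_sub_cancel', sub_self, Real.rpow_zero, ENNReal.ofReal_one, one_mul]
    _ ≤ _ := by gcongr

lemma besovNorm_eq_iSup_sq (n : ℕ) (s : ℝ) (g : EuclideanSpace ℝ (Fin n) → ℝ) :
    besovNorm n s g = ⨆ (r : ℝ) (_ : 0 < r),
      ENNReal.ofReal (r ^ s) * ⨆ x, heatConv n (r ^ 2) g x := by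
  apply le_antisymm
  · refine iSup₂_le fun t ht => le_iSup₂_of_le √t (Real.sqrt_pos.2 ht) ?_
    rw [Real.sq_sqrt ht.le, Real.sqrt_eq_rpow, ← Real.rpow_mul ht.le, one_div_mul_eq_div]
  · refine iSup₂_le fun r hr => le_iSup₂_of_le (r ^ 2) (by positivity) ?_
    rw [sq_rpow_half hr.le]

lemma heatK_nonneg (n : ℕ) {t : ℝ} (ht : 0 ≤ t) (z : EuclideanSpace ℝ (Fin n)) :
    0 ≤ heatK n t z := by
  unfold heatK
  positivity

lemma heatK_sq_ge_of_norm_lt {n : ℕ} {r : ℝ} (hr : 0 < r) {z : EuclideanSpace ℝ (Fin n)}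
    (hz : ‖z‖ < r) : (4 * π) ^ (-(n : ℝ) / 2) * Real.exp (-1 / 4) * r ^ (-(n : ℝ)) ≤
      heatK n (r ^ 2) z := by
  have hexp : -1 / 4 ≤ -‖z‖ ^ 2 / (4 * r ^ 2) := by
    rw [neg_div, neg_div, neg_le_neg_iff, div_le_iff₀ (by positivity)]
    nlinarith [norm_nonneg z]
  rw [heatK_sq n hr.le, mul_right_comm]
  gcongr

lemma lintegral_ball_le_heatConv_sq {n : ℕ} {g : EuclideanSpace ℝ (Fin n) → ℝ}
    (hg : ∀ y, 0 ≤ g y) (x : EuclideanSpace ℝ (Fin n)) {r : ℝ} (hr : 0 < r) :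
    ENNReal.ofReal ((4 * π) ^ (-(n : ℝ) / 2) * Real.exp (-1 / 4) * r ^ (-(n : ℝ))) *
      ∫⁻ y in ball x r, ENNReal.ofReal |g y| ≤ heatConv n (r ^ 2) g x := by
  set c := (4 * π) ^ (-(n : ℝ) / 2) * Real.exp (-1 / 4) * r ^ (-(n : ℝ))
  have hc : 0 ≤ c := by positivity
  calc ENNReal.ofReal c * ∫⁻ y in ball x r, ENNReal.ofReal |g y|
      = ∫⁻ y in ball x r, ENNReal.ofReal (c * g y) := by
        rw [← lintegral_const_mul' _ _ ENNReal.ofReal_ne_top]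
        simp only [ENNReal.ofReal_mul hc, abs_of_nonneg (hg _)]
    _ ≤ ∫⁻ y in ball x r, ENNReal.ofReal (heatK n (r ^ 2) (x - y) * g y) := by
        refine setLIntegral_mono' measurableSet_ball fun y hy => ENNReal.ofReal_le_ofReal ?_
        have hxy : ‖x - y‖ < r := by rwa [← dist_eq_norm, dist_comm]
        exact mul_le_mul_of_nonneg_right (heatK_sq_ge_of_norm_lt hr hxy) (hg y)
    _ ≤ heatConv n (r ^ 2) g x := setLIntegral_le_lintegral _ _

lemma morreyNorm_le_besovNorm {n : ℕ} (hn : n ≠ 0) (s : ℝ)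
    {g : EuclideanSpace ℝ (Fin n) → ℝ} (hg : ∀ y, 0 ≤ g y) :
    ENNReal.ofReal ((4 * π) ^ (-(n : ℝ) / 2) * Real.exp (-1 / 4)) * morreyNorm n 1 (n / s) g ≤
      besovNorm n s g := by
  rw [morreyNorm_one_div_eq hn, besovNorm_eq_iSup_sq]
  simp only [ENNReal.mul_iSup]
  refine iSup_le fun x => iSup₂_le fun r hr => le_iSup₂_of_le r hr ?_
  set c := (4 * π) ^ (-(n : ℝ) / 2) * Real.exp (-1 / 4)
  calc ENNReal.ofReal c *
        (ENNReal.ofReal (r ^ (s - n)) * ∫⁻ y in ball x r, ENNReal.ofReal |g y|)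
      = ENNReal.ofReal (r ^ s) * (ENNReal.ofReal (c * r ^ (-(n : ℝ))) *
          ∫⁻ y in ball x r, ENNReal.ofReal |g y|) := by
        rw [← mul_assoc, ← mul_assoc, ← ENNReal.ofReal_mul (by positivity),
          ← ENNReal.ofReal_mul (by positivity), sub_eq_add_neg, Real.rpow_add hr, mul_left_comm]
    _ ≤ ENNReal.ofReal (r ^ s) * heatConv n (r ^ 2) g x := by
        gcongr
        exact lintegral_ball_le_heatConv_sq hg x hr
    _ ≤ ⨆ x, ENNReal.ofReal (r ^ s) * heatConv n (r ^ 2) g x := le_iSup_of_le x le_rfl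

lemma heatK_sq_le_of_mem_dyadicAnnulus {n : ℕ} {r : ℝ} (hr : 0 < r)
    {x y : EuclideanSpace ℝ (Fin n)} {k : ℕ} (hy : y ∈ dyadicAnnulus x r k) :
    heatK n (r ^ 2) (x - y) ≤
      (4 * π) ^ (-(n : ℝ) / 2) * r ^ (-(n : ℝ)) * dyadicGaussWeight k := by
  rw [heatK_sq n hr.le, ← dist_eq_norm]
  gcongr
  exact exp_neg_le_dyadicGaussWeight hr hy

lemma setLIntegral_dyadicAnnulus_le {n : ℕ} (hn : n ≠ 0) (s : ℝ)
    (f : EuclideanSpace ℝ (Fin n) → ℝ) (x : EuclideanSpace ℝ (Fin n)) {r : ℝ} (hr : 0 < r)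
    (k : ℕ) :
    ∫⁻ y in dyadicAnnulus x r k, ENNReal.ofReal (heatK n (r ^ 2) (x - y) * f y) ≤
      ENNReal.ofReal ((4 * π) ^ (-(n : ℝ) / 2) *
        (dyadicGaussWeight k * ((2 : ℝ) ^ k) ^ ((n : ℝ) - s)) * r ^ (-s)) *
        morreyNorm n 1 (n / s) f := by
  set c := (4 * π) ^ (-(n : ℝ) / 2) * r ^ (-(n : ℝ)) * dyadicGaussWeight k
  have hc : 0 ≤ c := mul_nonneg (by positivity) (dyadicGaussWeight_nonneg k)
  have hscale : c * (2 ^ k * r) ^ ((n : ℝ) - s) = (4 * π) ^ (-(n : ℝ) / 2) *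
      (dyadicGaussWeight k * ((2 : ℝ) ^ k) ^ ((n : ℝ) - s)) * r ^ (-s) := by
    have hr_pow : r ^ (-(n : ℝ)) * r ^ ((n : ℝ) - s) = r ^ (-s) := by
      rw [← Real.rpow_add hr]
      ring_nf
    rw [Real.mul_rpow (by positivity) hr.le, ← hr_pow]
    ring
  calc ∫⁻ y in dyadicAnnulus x r k, ENNReal.ofReal (heatK n (r ^ 2) (x - y) * f y)
      ≤ ∫⁻ y in dyadicAnnulus x r k, ENNReal.ofReal (c * |f y|) := by
        refine setLIntegral_mono' (measurableSet_dyadicAnnulus x r k) fun y hy =>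
          ENNReal.ofReal_le_ofReal ?_
        calc heatK n (r ^ 2) (x - y) * f y ≤ heatK n (r ^ 2) (x - y) * |f y| :=
              mul_le_mul_of_nonneg_left (le_abs_self _) (heatK_nonneg n (sq_nonneg r) _)
          _ ≤ c * |f y| :=
              mul_le_mul_of_nonneg_right (heatK_sq_le_of_mem_dyadicAnnulus hr hy) (abs_nonneg _)
    _ = ENNReal.ofReal c * ∫⁻ y in dyadicAnnulus x r k, ENNReal.ofReal |f y| := by
        simp only [ENNReal.ofReal_mul hc]
        exact lintegral_const_mul' _ _ ENNReal.ofReal_ne_top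
    _ ≤ ENNReal.ofReal c * ∫⁻ y in ball x (2 ^ k * r), ENNReal.ofReal |f y| := by
        gcongr
        exact dyadicAnnulus_subset_ball x r k
    _ ≤ ENNReal.ofReal c * (ENNReal.ofReal ((2 ^ k * r) ^ ((n : ℝ) - s)) *
          morreyNorm n 1 (n / s) f) := by
        gcongr
        exact lintegral_ball_le_morreyNorm hn s f x (by positivity)
    _ = _ := by rw [← mul_assoc, ← ENNReal.ofReal_mul hc, hscale]

lemma heatConv_sq_le_morreyNorm {n : ℕ} (hn : n ≠ 0) {s : ℝ} (hs : 0 ≤ s)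
    (f : EuclideanSpace ℝ (Fin n) → ℝ) (x : EuclideanSpace ℝ (Fin n)) {r : ℝ}
    (hr : 0 < r) :
    ENNReal.ofReal (r ^ s) * heatConv n (r ^ 2) f x ≤
      ENNReal.ofReal ((4 * π) ^ (-(n : ℝ) / 2) * (2 * (n ! * 16 ^ n))) *
        morreyNorm n 1 (n / s) f := by
  set c := (4 * π) ^ (-(n : ℝ) / 2)
  set M := morreyNorm n 1 (n / s) f
  have hc : 0 ≤ c := by positivity
  calc ENNReal.ofReal (r ^ s) * heatConv n (r ^ 2) f x
      ≤ ENNReal.ofReal (r ^ s) * ∑' k,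
          ∫⁻ y in dyadicAnnulus x r k, ENNReal.ofReal (heatK n (r ^ 2) (x - y) * f y) := by
        rw [heatConv, ← setLIntegral_univ, ← iUnion_dyadicAnnulus x hr]
        gcongr
        exact lintegral_iUnion_le _ _
    _ ≤ ENNReal.ofReal (r ^ s) * ∑' k, ENNReal.ofReal (c *
          (dyadicGaussWeight k * ((2 : ℝ) ^ k) ^ ((n : ℝ) - s)) * r ^ (-s)) * M := by
        gcongr with k
        exact setLIntegral_dyadicAnnulus_le hn s f x hr k
    _ = ∑' k,
          ENNReal.ofReal (c * (dyadicGaussWeight k * ((2 : ℝ) ^ k) ^ ((n : ℝ) - s))) * M := by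
        rw [← ENNReal.tsum_mul_left]
        refine tsum_congr fun k => ?_
        rw [← mul_assoc, ← ENNReal.ofReal_mul (by positivity), Real.rpow_neg hr.le]
        field_simp
    _ ≤ ∑' k, ENNReal.ofReal (c * (n ! * 16 ^ n) * (1 / 2) ^ k) * M := by
        refine ENNReal.tsum_le_tsum fun k => mul_le_mul_left (ENNReal.ofReal_le_ofReal ?_) M
        rw [mul_assoc]
        exact mul_le_mul_of_nonneg_left (dyadicGaussWeight_mul_rpow_le hn hs k) hc
    _ = ENNReal.ofReal (c * (2 * (n ! * 16 ^ n))) * M := by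
        rw [ENNReal.tsum_mul_right, ← ENNReal.ofReal_tsum_of_nonneg (fun k => by positivity)
          (summable_geometric_two.mul_left _), tsum_mul_left, tsum_geometric_two]
        ring_nf

lemma besovNorm_le_morreyNorm {n : ℕ} (hn : n ≠ 0) {s : ℝ} (hs : 0 ≤ s)
    (f : EuclideanSpace ℝ (Fin n) → ℝ) :
    besovNorm n s f ≤ ENNReal.ofReal ((4 * π) ^ (-(n : ℝ) / 2) * (2 * (n ! * 16 ^ n))) *
      morreyNorm n 1 (n / s) f := by
  rw [besovNorm_eq_iSup_sq]
  refine iSup₂_le fun r hr => ?_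
  rw [ENNReal.mul_iSup]
  exact iSup_le fun x => heatConv_sq_le_morreyNorm hn hs f x hr

theorem besov_equiv_morrey_general (n : ℕ) (s : ℝ) (hs : 0 < s) (hsn : s ≤ n) :
    ∃ C : ℝ, 1 ≤ C ∧ ∀ (g : EuclideanSpace ℝ (Fin n) → ℝ), Measurable g → (∀ y, 0 ≤ g y) →
      (ENNReal.ofReal C)⁻¹ * morreyNorm n 1 ((n : ℝ) / s) g ≤ besovNorm n s g ∧
      besovNorm n s g ≤ ENNReal.ofReal C * morreyNorm n 1 ((n : ℝ) / s) g := by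
  have hn : n ≠ 0 := by
    rintro rfl
    norm_num at hsn
    linarith
  set c := (4 * π) ^ (-(n : ℝ) / 2) * Real.exp (-1 / 4)
  set D := (4 * π) ^ (-(n : ℝ) / 2) * (2 * (n ! * 16 ^ n))
  have hc : 0 < c := by positivity
  refine ⟨max 1 (max c⁻¹ D), le_max_left _ _, fun g _ hg => ⟨?_, ?_⟩⟩
  · calc (ENNReal.ofReal (max 1 (max c⁻¹ D)))⁻¹ * morreyNorm n 1 (n / s) g
        ≤ ENNReal.ofReal c * morreyNorm n 1 (n / s) g := by
          gcongr
          rw [← inv_inv (ENNReal.ofReal c), ← ENNReal.ofReal_inv_of_pos hc]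
          gcongr
          exact le_max_of_le_right (le_max_left _ _)
      _ ≤ besovNorm n s g := morreyNorm_le_besovNorm hn s hg
  · refine (besovNorm_le_morreyNorm hn hs.le g).trans ?_
    gcongr
    exact le_max_of_le_right (le_max_right _ _)

/-- for nonnegative `g` and `0 < s ≤ n`, the thermic Besov norm
`‖g‖_{Ḃ^{-s,∞}_∞}` is equivalent to the Morrey norm `‖g‖_{Ṁ^{1,n/s}}`. -/
theorem besov_equiv_morrey (n : ℕ) (hn : 1 ≤ n) (s : ℝ) (hs : 0 < s) (hsn : s ≤ n) :
    ∃ C : ℝ, 1 ≤ C ∧ ∀ (g : EuclideanSpace ℝ (Fin n) → ℝ), Measurable g → (∀ y, 0 ≤ g y) →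
      (ENNReal.ofReal C)⁻¹ * morreyNorm n 1 ((n : ℝ) / s) g ≤ besovNorm n s g ∧
      besovNorm n s g ≤ ENNReal.ofReal C * morreyNorm n 1 ((n : ℝ) / s) g :=
  besov_equiv_morrey_general n s hs hsn
end

section
/- Let 0 < α < β, let g : ℝⁿ → [0,∞) be measurable with M := M_B g(x) < ∞ for a fixed x, and suppose sup_{t>0} t^{β/2}(h_t * g)(x) ≤ A < ∞. Then Γ(α/2) I_α g(x) = ∫_0^∞ t^{α/2−1}(h_t*g)(x) dt ≤ C(n,α,β) M^{1−α/β} A^{α/β}, where h_t is the heat kernel and the small-time part of the integral is bounded using (h_t*g)(x) ≤ C(n) M and the large-time part using (h_t*g)(x) ≤ A t^{-β/2}. -/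
open MeasureTheory Metric Set ENNReal

noncomputable def maximalFn (n : ℕ) (g : EuclideanSpace ℝ (Fin n) → ℝ)
    (x : EuclideanSpace ℝ (Fin n)) : ℝ≥0∞ :=
  ⨆ (z : EuclideanSpace ℝ (Fin n)) (r : ℝ) (_ : 0 < r) (_ : x ∈ ball z r),
    (volume (ball z r))⁻¹ * ∫⁻ y in ball z r, ENNReal.ofReal (|g y|)

/-!
The Gaussian `exp(-|x - y|²/4t)` is at most `e^{-k/4}` off the ball `B(x, k√t)`, so it is
dominated by `∑ₖ e^{-k/4} 1_{B(x, (k+1)√t)}(y)`. Integrating against `|g|` and using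
`∫_B |g| ≤ M_B g(x) |B|` with `|B(x, (k+1)√t)| ∝ (k+1)ⁿ t^{n/2}`, the factor `t^{n/2}` cancels the
normalisation of the heat kernel, giving `(h_t * g)(x) ≤ C(n) M_B g(x)` uniformly in `t`. Hence
the integrand is at most `t^{α/2-1} min(C(n) M, A t^{-β/2})`; splitting at the crossover time
`T = (A / C(n) M)^{2/β}`, both pieces are multiples of `M^{1-α/β} A^{α/β}`.
-/

lemma lintegral_tsum_indicator_mul_le {α : Type*} [MeasurableSpace α] {μ : Measure α}
    {f : α → ℝ≥0∞} (hf : AEMeasurable f μ) {s : ℕ → Set α} (hs : ∀ k, MeasurableSet (s k))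
    (a : ℕ → ℝ≥0∞) {m : ℝ≥0∞} (hm : ∀ k, ∫⁻ y in s k, f y ∂μ ≤ m * μ (s k)) :
    ∫⁻ y, (∑' k, (s k).indicator (fun _ ↦ a k) y) * f y ∂μ ≤ m * ∑' k, a k * μ (s k) := by
  have hterm : ∀ k, ∫⁻ y, (s k).indicator (fun _ ↦ a k) y * f y ∂μ ≤ a k * (m * μ (s k)) :=
    fun k ↦ by
      simp_rw [← indicator_mul_left, lintegral_indicator (hs k)]
      rw [lintegral_const_mul'' _ hf.restrict]
      exact mul_le_mul_right (hm k) _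
  simp_rw [← ENNReal.tsum_mul_right]
  rw [lintegral_tsum (f := fun k y ↦ (s k).indicator (fun _ ↦ a k) y * f y)
      fun k ↦ (measurable_const.indicator (hs k)).aemeasurable.mul hf,
    ← ENNReal.tsum_mul_left]
  refine ENNReal.tsum_le_tsum fun k ↦ (hterm k).trans_eq ?_
  ring

lemma ofReal_exp_neg_sq_le_tsum_indicator_ball {E : Type*} [PseudoMetricSpace E] (x y : E)
    {r : ℝ} (hr : 0 < r) :
    ENNReal.ofReal (Real.exp (-(dist x y / r) ^ 2 / 4)) ≤
      ∑' k : ℕ, (ball x ((k + 1) * r)).indicator (fun _ ↦ ENNReal.ofReal (Real.exp (-k / 4))) y := by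
  set d := dist x y / r
  have hd : 0 ≤ d := div_nonneg dist_nonneg hr.le
  set k := ⌊d⌋₊
  have hk : (k : ℝ) ≤ d := Nat.floor_le hd
  have hy : y ∈ ball x ((k + 1) * r) := by
    rw [mem_ball', ← div_lt_iff₀ hr]
    exact Nat.lt_floor_add_one d
  refine le_trans ?_ (ENNReal.le_tsum k)
  rw [indicator_of_mem hy]
  gcongr
  have hkk : (k : ℝ) ≤ k ^ 2 := by exact_mod_cast Nat.le_self_pow two_ne_zero k
  nlinarith

lemma summable_add_one_pow_mul_exp_neg_div (n : ℕ) {c : ℝ} (hc : 0 < c) :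
    Summable fun k : ℕ ↦ ((k : ℝ) + 1) ^ n * Real.exp (-k / c) := by
  have hshift := (summable_nat_add_iff 1).2 (Real.summable_pow_mul_exp_neg_nat_mul n (inv_pos.2 hc))
  refine (hshift.mul_left (Real.exp c⁻¹)).congr fun k ↦ ?_
  rw [mul_left_comm, ← Real.exp_add]
  push_cast
  congr 2
  field_simp
  ring

section Heat

variable {n : ℕ}

lemma setLIntegral_ball_le_maximalFn_mul (g : EuclideanSpace ℝ (Fin n) → ℝ)
    (x : EuclideanSpace ℝ (Fin n)) {R : ℝ} (hR : 0 < R) :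
    ∫⁻ y in ball x R, ENNReal.ofReal |g y| ≤ maximalFn n g x * volume (ball x R) := by
  have hV₀ : volume (ball x R) ≠ 0 := (measure_ball_pos volume x hR).ne'
  have hV : volume (ball x R) ≠ ⊤ := measure_ball_lt_top.ne
  have haverage : (volume (ball x R))⁻¹ * ∫⁻ y in ball x R, ENNReal.ofReal |g y| ≤
      maximalFn n g x :=
    le_iSup_of_le x <| le_iSup_of_le R <| le_iSup_of_le hR <|
      le_iSup_of_le (mem_ball_self hR) le_rfl
  calc ∫⁻ y in ball x R, ENNReal.ofReal |g y|
      = ((volume (ball x R))⁻¹ * ∫⁻ y in ball x R, ENNReal.ofReal |g y|) *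
          volume (ball x R) := by
        rw [mul_comm, ← mul_assoc, ENNReal.mul_inv_cancel hV₀ hV, one_mul]
    _ ≤ maximalFn n g x * volume (ball x R) := mul_le_mul_left haverage _

lemma ofReal_heatK_le {t : ℝ} (ht : 0 < t) (x y : EuclideanSpace ℝ (Fin n)) :
    ENNReal.ofReal (heatK n t (x - y)) ≤ ENNReal.ofReal ((4 * Real.pi * t) ^ (-(n : ℝ) / 2)) *
      ∑' k : ℕ, (ball x ((k + 1) * √t)).indicator
        (fun _ ↦ ENNReal.ofReal (Real.exp (-k / 4))) y := by
  have hexp : -‖x - y‖ ^ 2 / (4 * t) = -(dist x y / √t) ^ 2 / 4 := by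
    rw [dist_eq_norm, div_pow, Real.sq_sqrt ht.le]
    ring
  rw [heatK, hexp, ENNReal.ofReal_mul (by positivity)]
  gcongr
  exact ofReal_exp_neg_sq_le_tsum_indicator_ball x y (Real.sqrt_pos.2 ht)

noncomputable def heatMaxConst (n : ℕ) : ℝ :=
  (4 * Real.pi) ^ (-(n : ℝ) / 2) * (volume (ball (0 : EuclideanSpace ℝ (Fin n)) 1)).toReal *
    ∑' k : ℕ, ((k : ℝ) + 1) ^ n * Real.exp (-k / 4)

lemma heatMaxConst_pos (n : ℕ) : 0 < heatMaxConst n := by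
  have hV : 0 < (volume (ball (0 : EuclideanSpace ℝ (Fin n)) 1)).toReal :=
    ENNReal.toReal_pos (measure_ball_pos volume _ one_pos).ne' measure_ball_lt_top.ne
  have hS : 0 < ∑' k : ℕ, ((k : ℝ) + 1) ^ n * Real.exp (-k / 4) :=
    (summable_add_one_pow_mul_exp_neg_div n four_pos).tsum_pos (fun k ↦ by positivity) 0
      (by positivity)
  unfold heatMaxConst
  positivity

lemma ofReal_mul_tsum_volume_ball {t : ℝ} (ht : 0 < t) (x : EuclideanSpace ℝ (Fin n)) :
    ENNReal.ofReal ((4 * Real.pi * t) ^ (-(n : ℝ) / 2)) *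
      ∑' k : ℕ, ENNReal.ofReal (Real.exp (-k / 4)) * volume (ball x ((k + 1) * √t)) =
        ENNReal.ofReal (heatMaxConst n) := by
  have hball : ∀ k : ℕ, ENNReal.ofReal (Real.exp (-k / 4)) * volume (ball x ((k + 1) * √t)) =
      ENNReal.ofReal (t ^ ((n : ℝ) / 2) * (((k : ℝ) + 1) ^ n * Real.exp (-k / 4))) *
        volume (ball (0 : EuclideanSpace ℝ (Fin n)) 1) := by
    intro k
    rw [Measure.addHaar_ball_of_pos _ _ (by positivity), finrank_euclideanSpace_fin, ← mul_assoc,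
      ← ENNReal.ofReal_mul (by positivity), mul_pow, ← Real.rpow_natCast √t, Real.sqrt_eq_rpow,
      ← Real.rpow_mul ht.le]
    ring_nf
  have htn : (4 * Real.pi * t) ^ (-(n : ℝ) / 2) * t ^ ((n : ℝ) / 2) =
      (4 * Real.pi) ^ (-(n : ℝ) / 2) := by
    rw [Real.mul_rpow (by positivity) ht.le, mul_assoc, ← Real.rpow_add ht, neg_div,
      neg_add_cancel, Real.rpow_zero, mul_one]
  simp_rw [hball]
  rw [ENNReal.tsum_mul_right, ← ENNReal.ofReal_tsum_of_nonneg (fun k ↦ by positivity)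
      ((summable_add_one_pow_mul_exp_neg_div n four_pos).mul_left _),
    tsum_mul_left, ← mul_assoc, ← ENNReal.ofReal_mul (by positivity), ← mul_assoc, htn,
    heatMaxConst, mul_right_comm, ENNReal.ofReal_mul' ENNReal.toReal_nonneg,
    ENNReal.ofReal_toReal measure_ball_lt_top.ne]

lemma heatConv_le_heatMaxConst_mul_maximalFn {g : EuclideanSpace ℝ (Fin n) → ℝ}
    (hg : Measurable g) {t : ℝ} (ht : 0 < t) (x : EuclideanSpace ℝ (Fin n)) :
    heatConv n t g x ≤ ENNReal.ofReal (heatMaxConst n) * maximalFn n g x := by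
  set c := ENNReal.ofReal ((4 * Real.pi * t) ^ (-(n : ℝ) / 2))
  set s : ℕ → Set (EuclideanSpace ℝ (Fin n)) := fun k ↦ ball x ((k + 1) * √t)
  set a : ℕ → ℝ≥0∞ := fun k ↦ ENNReal.ofReal (Real.exp (-k / 4))
  calc heatConv n t g x
      ≤ ∫⁻ y, c * ((∑' k, (s k).indicator (fun _ ↦ a k) y) * ENNReal.ofReal |g y|) :=
        lintegral_mono fun y ↦ by
          have hK : 0 ≤ heatK n t (x - y) := by unfold heatK; positivity
          calc ENNReal.ofReal (heatK n t (x - y) * g y)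
              ≤ ENNReal.ofReal (heatK n t (x - y)) * ENNReal.ofReal |g y| := by
                rw [← ENNReal.ofReal_mul hK]
                exact ENNReal.ofReal_le_ofReal (mul_le_mul_of_nonneg_left (le_abs_self _) hK)
            _ ≤ _ := by
                rw [← mul_assoc]
                exact mul_le_mul_left (ofReal_heatK_le ht x y) _
    _ = c * ∫⁻ y, (∑' k, (s k).indicator (fun _ ↦ a k) y) * ENNReal.ofReal |g y| :=
        lintegral_const_mul' _ _ ofReal_ne_top
    _ ≤ c * (maximalFn n g x * ∑' k, a k * volume (s k)) := by
        gcongr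
        exact lintegral_tsum_indicator_mul_le (hg.abs.ennreal_ofReal.aemeasurable)
          (fun k ↦ measurableSet_ball) a
          (fun k ↦ setLIntegral_ball_le_maximalFn_mul g x (by positivity))
    _ = ENNReal.ofReal (heatMaxConst n) * maximalFn n g x := by
        rw [mul_left_comm, ofReal_mul_tsum_volume_ball ht x, mul_comm]

end Heat

lemma lintegral_Ioc_rpow_sub_one {s : ℝ} (hs : 0 < s) {T : ℝ} (hT : 0 ≤ T) :
    ∫⁻ t in Ioc 0 T, ENNReal.ofReal (t ^ (s - 1)) = ENNReal.ofReal (T ^ s / s) := by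
  have hint : IntegrableOn (fun t : ℝ ↦ t ^ (s - 1)) (Ioc 0 T) := by
    rw [← intervalIntegrable_iff_integrableOn_Ioc_of_le hT]
    exact intervalIntegral.intervalIntegrable_rpow' (by linarith)
  rw [← ofReal_integral_eq_lintegral_ofReal hint
    (ae_restrict_of_forall_mem measurableSet_Ioc fun t ht ↦ Real.rpow_nonneg ht.1.le _),
    ← intervalIntegral.integral_of_le hT, integral_rpow (Or.inl (by linarith)),
    sub_add_cancel, Real.zero_rpow hs.ne', sub_zero]

lemma lintegral_Ioi_rpow_sub_one {s : ℝ} (hs : s < 0) {T : ℝ} (hT : 0 < T) :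
    ∫⁻ t in Ioi T, ENNReal.ofReal (t ^ (s - 1)) = ENNReal.ofReal (T ^ s / -s) := by
  have ha : s - 1 < -1 := by linarith
  rw [← ofReal_integral_eq_lintegral_ofReal (integrableOn_Ioi_rpow_of_lt ha hT)
    (ae_restrict_of_forall_mem measurableSet_Ioi fun t ht ↦ Real.rpow_nonneg (hT.trans ht).le _),
    integral_Ioi_rpow_of_lt ha hT, sub_add_cancel, neg_div, div_neg]

lemma lintegral_rpow_mul_le_of_le_min_of_pos {F : ℝ → ℝ≥0∞} {s r M A : ℝ} (hs : 0 < s)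
    (hsr : s < r) (hM : 0 < M) (hA : 0 < A) (hbdd : ∀ t ∈ Ioi 0, F t ≤ ENNReal.ofReal M)
    (hdecay : ∀ t ∈ Ioi 0, F t ≤ ENNReal.ofReal (A * t ^ (-r))) :
    ∫⁻ t in Ioi 0, ENNReal.ofReal (t ^ (s - 1)) * F t ≤
      ENNReal.ofReal ((1 / s + 1 / (r - s)) * M ^ (1 - s / r) * A ^ (s / r)) := by
  set T := (A / M) ^ (1 / r)
  have hr : 0 < r := hs.trans hsr
  have hT : 0 < T := Real.rpow_pos_of_pos (div_pos hA hM) _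
  have hsmall : M * T ^ s = M ^ (1 - s / r) * A ^ (s / r) := by
    rw [← Real.rpow_mul (div_pos hA hM).le, Real.div_rpow hA.le hM.le, Real.rpow_sub hM,
      Real.rpow_one]
    field_simp
  have hlarge : A * T ^ (s - r) = M ^ (1 - s / r) * A ^ (s / r) := by
    rw [← Real.rpow_mul (div_pos hA hM).le, Real.div_rpow hA.le hM.le, Real.rpow_sub hM,
      Real.rpow_one, show 1 / r * (s - r) = s / r - 1 by field_simp, Real.rpow_sub hA,
      Real.rpow_sub hM, Real.rpow_one, Real.rpow_one]
    field_simp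
  set P := M ^ (1 - s / r) * A ^ (s / r) with hP_def
  have hs_r : s - r < 0 := by linarith
  have hsmall_int : ∫⁻ t in Ioc 0 T, ENNReal.ofReal (t ^ (s - 1)) * F t ≤
      ENNReal.ofReal (P / s) := by
    calc ∫⁻ t in Ioc 0 T, ENNReal.ofReal (t ^ (s - 1)) * F t
        ≤ ∫⁻ t in Ioc 0 T, ENNReal.ofReal M * ENNReal.ofReal (t ^ (s - 1)) :=
          setLIntegral_mono' measurableSet_Ioc fun t ht ↦ by
            rw [mul_comm (ENNReal.ofReal M)]; exact mul_le_mul_right (hbdd t ht.1) _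
      _ = ENNReal.ofReal (P / s) := by
          rw [lintegral_const_mul' _ _ ofReal_ne_top, lintegral_Ioc_rpow_sub_one hs hT.le,
            ← ENNReal.ofReal_mul hM.le, ← mul_div_assoc, hsmall]
  have hlarge_int : ∫⁻ t in Ioi T, ENNReal.ofReal (t ^ (s - 1)) * F t ≤
      ENNReal.ofReal (P / (r - s)) := by
    calc ∫⁻ t in Ioi T, ENNReal.ofReal (t ^ (s - 1)) * F t
        ≤ ∫⁻ t in Ioi T, ENNReal.ofReal A * ENNReal.ofReal (t ^ (s - r - 1)) :=
          setLIntegral_mono' measurableSet_Ioi fun t ht ↦ by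
            have ht0 : 0 < t := hT.trans ht
            calc ENNReal.ofReal (t ^ (s - 1)) * F t
                ≤ ENNReal.ofReal (t ^ (s - 1)) * ENNReal.ofReal (A * t ^ (-r)) :=
                  mul_le_mul_right (hdecay t ht0) _
              _ = ENNReal.ofReal A * ENNReal.ofReal (t ^ (s - r - 1)) := by
                  rw [← ENNReal.ofReal_mul (by positivity), ← ENNReal.ofReal_mul hA.le,
                    mul_left_comm, ← Real.rpow_add ht0]
                  ring_nf
      _ = ENNReal.ofReal (P / (r - s)) := by
          rw [lintegral_const_mul' _ _ ofReal_ne_top, lintegral_Ioi_rpow_sub_one hs_r hT,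
            ← ENNReal.ofReal_mul hA.le, ← mul_div_assoc, hlarge, neg_sub]
  calc ∫⁻ t in Ioi 0, ENNReal.ofReal (t ^ (s - 1)) * F t
      = (∫⁻ t in Ioc 0 T, ENNReal.ofReal (t ^ (s - 1)) * F t) +
          ∫⁻ t in Ioi T, ENNReal.ofReal (t ^ (s - 1)) * F t := by
        rw [← Ioc_union_Ioi_eq_Ioi hT.le,
          lintegral_union measurableSet_Ioi (Ioc_disjoint_Ioi le_rfl)]
    _ ≤ ENNReal.ofReal (P / s) + ENNReal.ofReal (P / (r - s)) :=
        add_le_add hsmall_int hlarge_int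
    _ = ENNReal.ofReal ((1 / s + 1 / (r - s)) * M ^ (1 - s / r) * A ^ (s / r)) := by
        have hP : 0 ≤ P := by positivity
        rw [← ENNReal.ofReal_add (by positivity) (div_nonneg hP (by linarith)), hP_def]
        ring_nf

lemma le_ofReal_mul_rpow_neg_of_ofReal_rpow_mul_le {u : ℝ≥0∞} {t r A : ℝ} (ht : 0 < t)
    (h : ENNReal.ofReal (t ^ r) * u ≤ ENNReal.ofReal A) : u ≤ ENNReal.ofReal (A * t ^ (-r)) := by
  have htr : 0 < t ^ r := Real.rpow_pos_of_pos ht r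
  rw [Real.rpow_neg ht.le, ← div_eq_mul_inv, ENNReal.ofReal_div_of_pos htr,
    ENNReal.le_div_iff_mul_le (Or.inl (ENNReal.ofReal_pos.2 htr).ne') (Or.inl ofReal_ne_top),
    mul_comm]
  exact h

lemma lintegral_rpow_mul_le_of_le_min {F : ℝ → ℝ≥0∞} {s r M A : ℝ} (hs : 0 < s)
    (hsr : s < r) (hM : 0 ≤ M) (hA : 0 ≤ A) (hbdd : ∀ t ∈ Ioi 0, F t ≤ ENNReal.ofReal M)
    (hdecay : ∀ t ∈ Ioi 0, F t ≤ ENNReal.ofReal (A * t ^ (-r))) :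
    ∫⁻ t in Ioi 0, ENNReal.ofReal (t ^ (s - 1)) * F t ≤
      ENNReal.ofReal ((1 / s + 1 / (r - s)) * M ^ (1 - s / r) * A ^ (s / r)) := by
  by_cases hpos : 0 < M ∧ 0 < A
  · exact lintegral_rpow_mul_le_of_le_min_of_pos hs hsr hpos.1 hpos.2 hbdd hdecay
  have hF : ∀ t ∈ Ioi 0, F t = 0 := fun t ht ↦ by
    rcases not_and_or.1 hpos with hM₀ | hA₀
    · simpa [le_antisymm (not_lt.1 hM₀) hM] using hbdd t ht
    · simpa [le_antisymm (not_lt.1 hA₀) hA] using hdecay t ht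
  calc ∫⁻ t in Ioi 0, ENNReal.ofReal (t ^ (s - 1)) * F t
      ≤ ∫⁻ _ in Ioi (0 : ℝ), 0 := setLIntegral_mono' measurableSet_Ioi fun t ht ↦ by simp [hF t ht]
    _ ≤ _ := by simp

theorem heat_riesz_splitting_general (n : ℕ) (α β : ℝ) (hα : 0 < α) (hαβ : α < β) :
    ∃ C : ℝ, 0 < C ∧ ∀ (g : EuclideanSpace ℝ (Fin n) → ℝ), Measurable g → (∀ y, 0 ≤ g y) →
      ∀ (x : EuclideanSpace ℝ (Fin n)) (M A : ℝ), 0 ≤ M → 0 ≤ A →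
        maximalFn n g x ≤ ENNReal.ofReal M →
        (∀ t : ℝ, 0 < t → ENNReal.ofReal (t ^ (β / 2)) * heatConv n t g x ≤ ENNReal.ofReal A) →
        (∫⁻ t in Ioi (0 : ℝ), ENNReal.ofReal (t ^ (α / 2 - 1)) * heatConv n t g x) ≤
          ENNReal.ofReal (C * M ^ (1 - α / β) * A ^ (α / β)) := by
  have hC := heatMaxConst_pos n
  refine ⟨(1 / (α / 2) + 1 / (β / 2 - α / 2)) * heatMaxConst n ^ (1 - α / β), ?_, ?_⟩
  · have : 0 < β / 2 - α / 2 := by linarith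
    positivity
  intro g hg _ x M A hM hA hMx hdecay
  have hsmall : ∀ t ∈ Ioi (0 : ℝ), heatConv n t g x ≤ ENNReal.ofReal (heatMaxConst n * M) :=
    fun t ht ↦ by
      rw [ENNReal.ofReal_mul hC.le]
      exact (heatConv_le_heatMaxConst_mul_maximalFn hg ht x).trans (by gcongr)
  have hsplit := lintegral_rpow_mul_le_of_le_min (s := α / 2) (r := β / 2) (by positivity)
    (by linarith) (by positivity) hA hsmall
    fun t ht ↦ le_ofReal_mul_rpow_neg_of_ofReal_rpow_mul_le ht (hdecay t ht)
  rw [div_div_div_cancel_right₀ two_ne_zero, Real.mul_rpow hC.le hM] at hsplit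
  convert hsplit using 2
  ring

/-- for `0 < α < β`, `g ≥ 0` with `M_B g(x) ≤ M` and
`sup_{t>0} t^{β/2}(h_t*g)(x) ≤ A`, one has
`Γ(α/2) I_α g(x) = ∫_0^∞ t^{α/2-1}(h_t*g)(x) dt ≤ C(n,α,β) M^{1-α/β} A^{α/β}`. -/
theorem heat_riesz_splitting (n : ℕ) (hn : 1 ≤ n) (α β : ℝ) (hα : 0 < α) (hαβ : α < β) :
    ∃ C : ℝ, 0 < C ∧ ∀ (g : EuclideanSpace ℝ (Fin n) → ℝ), Measurable g → (∀ y, 0 ≤ g y) →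
      ∀ (x : EuclideanSpace ℝ (Fin n)) (M A : ℝ), 0 ≤ M → 0 ≤ A →
        maximalFn n g x ≤ ENNReal.ofReal M →
        (∀ t : ℝ, 0 < t → ENNReal.ofReal (t ^ (β / 2)) * heatConv n t g x ≤ ENNReal.ofReal A) →
        (∫⁻ t in Ioi (0 : ℝ), ENNReal.ofReal (t ^ (α / 2 - 1)) * heatConv n t g x) ≤
          ENNReal.ofReal (C * M ^ (1 - α / β) * A ^ (α / β)) :=
  heat_riesz_splitting_general n α β hα hαβ
end
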